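/- arXiv:math/0701101 — 4 statements merged into one kernel-verified Lean document; each statement's English description precedes it below -/
import Mathlib

section
/- The R_ε-Conjecture is equivalent to the Finite R_ε-Conjecture. That is, the following are equivalent: (R_ε) for every ε > 0, every unit norm Riesz basic sequence {f_i}_{i=1}^∞ in a Hilbert space is a finite union of ε-Riesz basic sequences (i.e., ℕ admits a finite partition {A_1,…,A_r} such that each {f_i}_{i∈A_j} is an ε-Riesz basic sequence); (Finite R_ε) for all 0 < ε and 0 < A ≤ B, there is a natural number r = r(ε, A, B) such that for every n ∈ ℕ and every unit norm Riesz basic sequence {f_i}_{i=1}^n in ℓ₂ⁿ with Riesz basis bounds A, B, there is a partition {A_1,…,A_r} of {1,…,n} such that each {f_i}_{i∈A_j} is an ε-Riesz basic sequence. -/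
/-!
Finite ⇒ infinite: the first `n` vectors of the sequence span a space of dimension at most `n`,
so they have an isometric copy in `ℓ₂ⁿ`, which the finite conjecture partitions into `r` pieces.
Along an ultrafilter in `n` these colourings of `{0, …, n - 1}` converge to a colouring of `ℕ`
that agrees on each finite set with one of them, and being `ε`-Riesz only concerns finite sets.

Infinite ⇒ finite: if no `r` works for some `ε, A, B`, choose for every `r` a counterexample in
`ℓ₂^{n_r}`. Their orthogonal direct sum is a unit-norm Riesz sequence with bounds `A, B`; a
partition of it into `R` `ε`-Riesz pieces restricts to one of the `R`-th counterexample.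
-/

/-- `f` restricted to the index set `S` is a Riesz basic sequence with lower bound `A`
and upper bound `B`. -/
def IsRieszOn {H : Type*} [NormedAddCommGroup H] [InnerProductSpace ℂ H]
    {ι : Type*} (f : ι → H) (S : Set ι) (A B : ℝ) : Prop :=
  ∀ s : Finset ι, ↑s ⊆ S → ∀ a : ι → ℂ,
    A ^ 2 * ∑ i ∈ s, ‖a i‖ ^ 2 ≤ ‖∑ i ∈ s, a i • f i‖ ^ 2 ∧
    ‖∑ i ∈ s, a i • f i‖ ^ 2 ≤ B ^ 2 * ∑ i ∈ s, ‖a i‖ ^ 2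

open Finset Function Module

section IsRieszOn

variable {H K : Type*} [NormedAddCommGroup H] [InnerProductSpace ℂ H]
  [NormedAddCommGroup K] [InnerProductSpace ℂ K] {ι κ : Type*} {f : ι → H} {S T : Set ι}
  {A B : ℝ}

theorem IsRieszOn.mono (h : IsRieszOn f S A B) (hTS : T ⊆ S) : IsRieszOn f T A B :=
  fun s hs => h s (hs.trans hTS)

theorem IsRieszOn.of_isEmpty [IsEmpty ι] (f : ι → H) (S : Set ι) (A B : ℝ) :
    IsRieszOn f S A B := by
  intro s _ a
  simp [s.eq_empty_of_isEmpty]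

theorem isRieszOn_comp_iff_image {e : κ → ι} (he : Injective e) {T : Set κ} :
    IsRieszOn (f ∘ e) T A B ↔ IsRieszOn f (e '' T) A B := by
  classical
  constructor
  · intro h s hs a
    have hrange : ∀ x ∈ s, x ∈ Set.range e := fun x hx => Set.image_subset_range e T (hs hx)
    have hpre : ↑(s.preimage e he.injOn) ⊆ T := fun k hk => by
      obtain ⟨k', hk', hek⟩ := hs (mem_preimage.1 hk)
      exact he hek ▸ hk'
    have := h (s.preimage e he.injOn) hpre (a ∘ e)
    simp only [comp_apply] at this
    rwa [sum_preimage e s he.injOn (fun x => a x • f x) fun x hx hx' => absurd (hrange x hx) hx',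
      sum_preimage e s he.injOn (fun x => ‖a x‖ ^ 2) fun x hx hx' => absurd (hrange x hx) hx']
      at this
  · intro h s hs a
    have himage : ↑(s.image e) ⊆ e '' T := by
      rw [coe_image]; exact Set.image_mono hs
    have := h (s.image e) himage (extend e a 0)
    simpa only [sum_image he.injOn, he.extend_apply, comp_apply] using this

theorem IsRieszOn.comp_injective (h : IsRieszOn f S A B) {e : κ → ι} (he : Injective e) :
    IsRieszOn (f ∘ e) (e ⁻¹' S) A B :=
  (isRieszOn_comp_iff_image he).2 (h.mono (Set.image_preimage_subset e S))

theorem LinearIsometry.isRieszOn_comp_iff (L : H →ₗᵢ[ℂ] K) :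
    IsRieszOn (L ∘ f) S A B ↔ IsRieszOn f S A B := by
  have hsum : ∀ (s : Finset ι) (a : ι → ℂ),
      ‖∑ i ∈ s, a i • (L ∘ f) i‖ = ‖∑ i ∈ s, a i • f i‖ := fun s a => by
    simp only [comp_apply, ← map_smul, ← map_sum, L.norm_map]
  simp only [IsRieszOn, hsum]

end IsRieszOn

theorem Finset.sum_eq_sum_image_fst_preimage_mk {α M : Type*} {κ : α → Type*} [DecidableEq α]
    [AddCommMonoid M] (t : Finset (Σ r, κ r)) (g : (Σ r, κ r) → M) :
    ∑ l ∈ t, g l = ∑ r ∈ t.image Sigma.fst,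
      ∑ i ∈ t.preimage (Sigma.mk r) sigma_mk_injective.injOn, g ⟨r, i⟩ := by
  conv_lhs => rw [← t.sigma_image_fst_preimage_mk]
  rw [sum_sigma]

noncomputable def lp.singleLinearIsometry {𝕜 α : Type*} [NormedRing 𝕜] [DecidableEq α]
    {E : α → Type*} [∀ r, NormedAddCommGroup (E r)] [∀ r, Module 𝕜 (E r)]
    [∀ r, IsBoundedSMul 𝕜 (E r)] (p : ENNReal) [Fact (1 ≤ p)] (r : α) : E r →ₗᵢ[𝕜] lp E p :=
  { lp.lsingle p r with norm_map' := lp.norm_single (zero_lt_one.trans_le Fact.out) r }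

theorem IsRieszOn.lpSingle {α : Type*} [DecidableEq α] {E : α → Type*}
    [∀ r, NormedAddCommGroup (E r)] [∀ r, InnerProductSpace ℂ (E r)] {κ : α → Type*}
    {f : ∀ r, κ r → E r} {A B : ℝ} (hf : ∀ r, IsRieszOn (f r) Set.univ A B) :
    IsRieszOn (fun l : Σ r, κ r => lp.single 2 l.1 (f l.1 l.2)) Set.univ A B := by
  intro t _ b
  set R := t.image Sigma.fst
  set T : ∀ r, Finset (κ r) := fun r => t.preimage (Sigma.mk r) sigma_mk_injective.injOn
  set w : ∀ r, E r := fun r => ∑ i ∈ T r, b ⟨r, i⟩ • f r i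
  have hnorm : ‖∑ l ∈ t, b l • lp.single 2 l.1 (f l.1 l.2)‖ ^ 2 = ∑ r ∈ R, ‖w r‖ ^ 2 := by
    have hblock : ∀ r, ∑ i ∈ T r, b ⟨r, i⟩ • lp.single 2 r (f r i) = lp.single 2 r (w r) :=
      fun r => by simp only [w, ← lp.lsingle_apply (𝕜 := ℂ), map_sum, map_smul]
    have := lp.norm_sum_single (p := 2) (by norm_num) w R
    simp only [ENNReal.toReal_ofNat, Real.rpow_two] at this
    rw [t.sum_eq_sum_image_fst_preimage_mk, Finset.sum_congr rfl fun r _ => hblock r, this]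
  have hcoef : ∑ l ∈ t, ‖b l‖ ^ 2 = ∑ r ∈ R, ∑ i ∈ T r, ‖b ⟨r, i⟩‖ ^ 2 :=
    t.sum_eq_sum_image_fst_preimage_mk _
  rw [hnorm, hcoef, mul_sum, mul_sum]
  exact ⟨sum_le_sum fun r _ => (hf r (T r) (Set.subset_univ _) (fun i => b ⟨r, i⟩)).1,
    sum_le_sum fun r _ => (hf r (T r) (Set.subset_univ _) (fun i => b ⟨r, i⟩)).2⟩

theorem exists_linearIsometry_euclideanSpace {𝕜 V : Type*} [RCLike 𝕜] [NormedAddCommGroup V]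
    [InnerProductSpace 𝕜 V] [FiniteDimensional 𝕜 V] {n : ℕ} (h : finrank 𝕜 V ≤ n) :
    Nonempty (V →ₗᵢ[𝕜] EuclideanSpace 𝕜 (Fin n)) := by
  let b := stdOrthonormalBasis 𝕜 V
  let v : Fin (finrank 𝕜 V) → EuclideanSpace 𝕜 (Fin n) :=
    EuclideanSpace.basisFun (Fin n) 𝕜 ∘ Fin.castLE h
  have hv : Orthonormal 𝕜 v :=
    (EuclideanSpace.basisFun (Fin n) 𝕜).orthonormal.comp _ (Fin.castLE_injective h)
  refine ⟨(b.toBasis.constr 𝕜 v).isometryOfOrthonormal (v := b.toBasis) (by simp) ?_⟩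
  convert hv
  ext1 j
  simp

theorem exists_euclideanSpace_copy {H : Type*} [NormedAddCommGroup H] [InnerProductSpace ℂ H]
    {n : ℕ} (f : Fin n → H) :
    ∃ g : Fin n → EuclideanSpace ℂ (Fin n), (∀ i, ‖g i‖ = ‖f i‖) ∧
      ∀ S A B, IsRieszOn g S A B ↔ IsRieszOn f S A B := by
  let V := Submodule.span ℂ (Set.range f)
  have : FiniteDimensional ℂ V := .span_of_finite ℂ (Set.finite_range f)
  have hV : finrank ℂ V ≤ n := (finrank_range_le_card f).trans_eq (Fintype.card_fin n)
  obtain ⟨L⟩ := exists_linearIsometry_euclideanSpace hV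
  let v : Fin n → V := fun i => ⟨f i, Submodule.subset_span (Set.mem_range_self i)⟩
  refine ⟨L ∘ v, fun i => L.norm_map (v i), fun S A B => ?_⟩
  rw [L.isRieszOn_comp_iff, ← V.subtypeₗᵢ.isRieszOn_comp_iff]
  rfl

theorem exists_limit_forall_finset_eq {α : Type*} [Finite α] (c : ∀ n : ℕ, Fin n → α) :
    ∃ c' : ℕ → α, ∀ s : Finset ℕ, ∃ n, ∀ i ∈ s, ∃ h : i < n, c n ⟨i, h⟩ = c' i := by
  let U := Filter.hyperfilter ℕ
  have hlim : ∀ i, ∃ v, ∀ᶠ n in (U : Filter ℕ), ∃ h : i < n, c n ⟨i, h⟩ = v := fun i =>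
    Ultrafilter.eventually_exists_iff.1 <|
      ((Filter.eventually_gt_atTop i).filter_mono Nat.hyperfilter_le_atTop).mono
        fun n h => ⟨_, h, rfl⟩
  choose c' hc' using hlim
  exact ⟨c', fun s => ((Filter.eventually_all_finset s).2 fun i _ => hc' i).exists⟩

universe u

def REpsilonConjecture : Prop :=
  ∀ ε : ℝ, 0 < ε →
    ∀ (H : Type u) (_ : NormedAddCommGroup H) (_ : InnerProductSpace ℂ H)
      (_ : CompleteSpace H), ∀ f : ℕ → H, (∀ i, ‖f i‖ = 1) →
      (∃ A B : ℝ, 0 < A ∧ A ≤ B ∧ IsRieszOn f Set.univ A B) →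
      ∃ r : ℕ, ∃ c : ℕ → Fin r, ∀ j : Fin r,
        IsRieszOn f {i | c i = j} (1 - ε) (1 + ε)

def FiniteREpsilonConjecture : Prop :=
  ∀ ε A B : ℝ, 0 < ε → 0 < A → A ≤ B → ∃ r : ℕ, ∀ n : ℕ,
    ∀ f : Fin n → EuclideanSpace ℂ (Fin n), (∀ i, ‖f i‖ = 1) →
    IsRieszOn f Set.univ A B →
    ∃ c : Fin n → Fin r, ∀ j : Fin r,
      IsRieszOn f {i | c i = j} (1 - ε) (1 + ε)

theorem FiniteREpsilonConjecture.rEpsilonConjecture (h : FiniteREpsilonConjecture) :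
    REpsilonConjecture.{u} := by
  intro ε hε H _ _ _ f hunit ⟨A, B, hA, hAB, hf⟩
  obtain ⟨r, hr⟩ := h ε A B hε hA hAB
  have hcol : ∀ n, ∃ c : Fin n → Fin r, ∀ j,
      IsRieszOn (f ∘ Fin.val) {i | c i = j} (1 - ε) (1 + ε) := fun n => by
    obtain ⟨g, hg_norm, hg⟩ := exists_euclideanSpace_copy (f ∘ Fin.val)
    obtain ⟨c, hc⟩ := hr n g (fun i => (hg_norm i).trans (hunit i))
      ((hg _ _ _).2 (by simpa using hf.comp_injective Fin.val_injective))
    exact ⟨c, fun j => (hg _ _ _).1 (hc j)⟩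
  choose c hc using hcol
  obtain ⟨c', hc'⟩ := exists_limit_forall_finset_eq c
  refine ⟨r, c', fun j s hs => ?_⟩
  obtain ⟨n, hn⟩ := hc' s
  have hsub : ↑s ⊆ Fin.val '' {i : Fin n | c n i = j} := fun i hi => by
    obtain ⟨hin, hci⟩ := hn i hi
    exact ⟨⟨i, hin⟩, hci.trans (hs hi), rfl⟩
  exact (isRieszOn_comp_iff_image Fin.val_injective).1 (hc n j) s hsub

theorem REpsilonConjecture.finiteREpsilonConjecture (h : REpsilonConjecture.{u}) :
    FiniteREpsilonConjecture := by
  intro ε A B hε hA hAB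
  by_contra! hbad
  choose n f hunit hriesz hbad using hbad
  have hn : ∀ r, 0 < n r := fun r => Nat.pos_of_ne_zero fun h0 => by
    have : IsEmpty (Fin (n r)) := by rw [h0]; infer_instance
    obtain ⟨j, hj⟩ := hbad r isEmptyElim
    exact hj (.of_isEmpty _ _ _ _)
  -- indexing the blocks by `ULift ℕ` puts their Hilbert sum in the universe `u` of the conjecture
  let ι := Σ r : ULift.{u} ℕ, Fin (n r.down)
  let E : ULift.{u} ℕ → Type := fun r => EuclideanSpace ℂ (Fin (n r.down))
  let g : ∀ r, Fin (n r.down) → E r := fun r => f r.down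
  let F : ι → lp E 2 := fun l => lp.single 2 l.1 (g l.1 l.2)
  have hF : IsRieszOn F Set.univ A B := IsRieszOn.lpSingle (f := g) fun r => hriesz r.down
  have : Infinite ι := Infinite.of_injective (fun r : ℕ => ⟨ULift.up r, ⟨0, hn r⟩⟩)
    fun _ _ h => ULift.up_injective (congrArg Sigma.fst h)
  obtain ⟨e⟩ : Nonempty (ℕ ≃ ι) :=
    (nonempty_denumerable ι).map fun (_ : Denumerable ι) => (Denumerable.eqv ι).symm
  obtain ⟨R, c, hc⟩ := h ε hε (lp E 2) inferInstance inferInstance inferInstance (F ∘ e)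
    (fun k => by simpa [F, g] using hunit _ _)
    ⟨A, B, hA, hAB, by simpa using hF.comp_injective e.injective⟩
  let incl : Fin (n R) → ℕ := fun i => e.symm ⟨ULift.up R, i⟩
  obtain ⟨j, hj⟩ := hbad R (c ∘ incl)
  let L := lp.singleLinearIsometry (𝕜 := ℂ) (E := E) 2 (ULift.up R)
  have hblock : L ∘ f R = (F ∘ e) ∘ incl := by
    funext i
    simp only [comp_apply, incl, e.apply_symm_apply]
    rfl
  refine hj (L.isRieszOn_comp_iff.1 ?_)
  rw [hblock]
  exact (hc j).comp_injective (e.symm.injective.comp sigma_mk_injective)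

/-- The `R_ε`-Conjecture is equivalent to the Finite `R_ε`-Conjecture. -/
theorem R_epsilon_iff_finite_R_epsilon :
    -- the `R_ε`-Conjecture
    (∀ ε : ℝ, 0 < ε →
      ∀ (H : Type*) (_ : NormedAddCommGroup H) (_ : InnerProductSpace ℂ H)
        (_ : CompleteSpace H), ∀ f : ℕ → H, (∀ i, ‖f i‖ = 1) →
        (∃ A B : ℝ, 0 < A ∧ A ≤ B ∧ IsRieszOn f Set.univ A B) →
        ∃ r : ℕ, ∃ c : ℕ → Fin r, ∀ j : Fin r,
          IsRieszOn f {i | c i = j} (1 - ε) (1 + ε))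
    ↔
    -- the Finite `R_ε`-Conjecture
    (∀ ε A B : ℝ, 0 < ε → 0 < A → A ≤ B → ∃ r : ℕ, ∀ n : ℕ,
      ∀ f : Fin n → EuclideanSpace ℂ (Fin n), (∀ i, ‖f i‖ = 1) →
      IsRieszOn f Set.univ A B →
      ∃ c : Fin n → Fin r, ∀ j : Fin r,
        IsRieszOn f {i | c i = j} (1 - ε) (1 + ε)) :=
  ⟨REpsilonConjecture.finiteREpsilonConjecture, FiniteREpsilonConjecture.rEpsilonConjecture⟩
end

section
/- Let f_1, …, f_n be vectors in a complex Hilbert space and let r ≥ 1 be a natural number. Then there exists a partition {A_1,…,A_r} of {1,…,n} such that for every j ∈ {1,…,r}, every i ∈ A_j, and every k ∈ {1,…,r} with k ≠ j, one has ∑_{ℓ ∈ A_j, ℓ ≠ i} |⟨f_i, f_ℓ⟩|² ≤ ∑_{ℓ ∈ A_k} |⟨f_i, f_ℓ⟩|². Such a partition is obtained by choosing, among all partitions of {1,…,n} into r sets, one minimizing ∑_{j=1}^r ∑_{i ∈ A_j} ∑_{ℓ ∈ A_j, ℓ ≠ i} |⟨f_i, f_ℓ⟩|². -/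
/-!
Recoloring a single vertex `i` from class `j` to class `k` changes the total within-class
weight by `2 (w_k(i) - w_j(i))`, where `w_m(i)` is the weight from `i` to the other members of
class `m`: since the weights are symmetric, every pair through `i` is counted twice. A coloring
minimizing the total weight exists because there are finitely many colorings, and at it
`w_j(i) ≤ w_k(i)`.
-/

open scoped InnerProductSpace
open Finset

section ClassWeight

variable {ι κ M : Type*} [Fintype ι] [DecidableEq ι] [DecidableEq κ] [AddCommMonoid M]

def classWeight (g : ι → ι → M) (c : ι → κ) (i : ι) (m : κ) : M :=
  ∑ ℓ ∈ univ.filter (fun ℓ => ℓ ≠ i ∧ c ℓ = m), g i ℓ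

def intraClassWeight (g : ι → ι → M) (c : ι → κ) : M :=
  ∑ i, classWeight g c i (c i)

lemma classWeight_eq_sum_erase (g : ι → ι → M) (c : ι → κ) (i : ι) (m : κ) :
    classWeight g c i m = ∑ ℓ ∈ (univ.erase i).filter (fun ℓ => c ℓ = m), g i ℓ := by
  unfold classWeight
  congr 1
  ext ℓ
  simp

lemma classWeight_congr (g : ι → ι → M) {c c' : ι → κ} {i : ι}
    (h : ∀ ℓ ≠ i, c' ℓ = c ℓ) (m : κ) : classWeight g c' i m = classWeight g c i m := by
  unfold classWeight
  congr 1
  ext ℓ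
  simp +contextual [h]

lemma classWeight_of_ne (g : ι → ι → M) (c : ι → κ) {i : ι} {m : κ}
    (hm : m ≠ c i) :
    classWeight g c i m = ∑ ℓ ∈ univ.filter (fun ℓ => c ℓ = m), g i ℓ := by
  unfold classWeight
  congr 1
  ext ℓ
  simp only [mem_filter, mem_univ, true_and, and_iff_right_iff_imp]
  rintro hℓ rfl
  exact hm hℓ.symm

lemma intraClassWeight_eq_add {g : ι → ι → M} (hg : ∀ a b, g a b = g b a)
    (c : ι → κ) (i : ι) :
    intraClassWeight g c =
      ∑ a ∈ univ.erase i, ∑ ℓ ∈ (univ.erase i).filter (fun ℓ => ℓ ≠ a ∧ c ℓ = c a), g a ℓ +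
        (classWeight g c i (c i) + classWeight g c i (c i)) := by
  have split (a : ι) : classWeight g c a (c a) =
      (if i ≠ a ∧ c i = c a then g a i else 0) +
        ∑ ℓ ∈ (univ.erase i).filter (fun ℓ => ℓ ≠ a ∧ c ℓ = c a), g a ℓ := by
    rw [classWeight, sum_filter, sum_filter, ← add_sum_erase _ _ (mem_univ i)]
  have through_i : ∑ a ∈ univ.erase i, (if i ≠ a ∧ c i = c a then g a i else 0) =
      classWeight g c i (c i) := by
    rw [classWeight_eq_sum_erase, sum_filter]
    refine sum_congr rfl fun a ha => ?_
    simp [(ne_of_mem_erase ha).symm, eq_comm, hg a i]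
  rw [intraClassWeight, ← add_sum_erase _ _ (mem_univ i), sum_congr rfl fun a _ => split a,
    sum_add_distrib, through_i]
  abel

lemma intraClassWeight_add_of_eq_of_ne {g : ι → ι → M}
    (hg : ∀ a b, g a b = g b a) {c c' : ι → κ} {i : ι} (h : ∀ ℓ ≠ i, c' ℓ = c ℓ) :
    intraClassWeight g c' + (classWeight g c i (c i) + classWeight g c i (c i)) =
      intraClassWeight g c + (classWeight g c i (c' i) + classWeight g c i (c' i)) := by
  have rest : ∀ a ∈ univ.erase i,
      ∑ ℓ ∈ (univ.erase i).filter (fun ℓ => ℓ ≠ a ∧ c' ℓ = c' a), g a ℓ =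
        ∑ ℓ ∈ (univ.erase i).filter (fun ℓ => ℓ ≠ a ∧ c ℓ = c a), g a ℓ := fun a ha =>
    sum_congr (filter_congr fun ℓ hℓ => by
      rw [h ℓ (ne_of_mem_erase hℓ), h a (ne_of_mem_erase ha)]) fun _ _ => rfl
  rw [intraClassWeight_eq_add hg c' i, intraClassWeight_eq_add hg c i, classWeight_congr g h,
    sum_congr rfl rest]
  abel

lemma classWeight_self_le_of_forall_le [LinearOrder M]
    [IsOrderedCancelAddMonoid M] {g : ι → ι → M} (hg : ∀ a b, g a b = g b a) {c : ι → κ}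
    (hmin : ∀ c' : ι → κ, intraClassWeight g c ≤ intraClassWeight g c') (i : ι) (k : κ) :
    classWeight g c i (c i) ≤ classWeight g c i k := by
  by_contra! hlt
  have hmove := intraClassWeight_add_of_eq_of_ne hg (c' := Function.update c i k)
    fun ℓ h => Function.update_of_ne h _ _
  rw [Function.update_self] at hmove
  have := calc
    intraClassWeight g c + (classWeight g c i k + classWeight g c i k)
      < intraClassWeight g c + (classWeight g c i (c i) + classWeight g c i (c i)) :=
        add_lt_add_right (add_lt_add hlt hlt) _
    _ ≤ intraClassWeight g (Function.update c i k) +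
          (classWeight g c i (c i) + classWeight g c i (c i)) :=
        add_le_add (hmin _) le_rfl
  exact this.ne hmove.symm

end ClassWeight

/-- Step 1 (following Halpern–Kaftal–Weiss): there is a partition `{A_1,…,A_r}` of
`{1,…,n}` (encoded by a coloring `c`, with `A_j = {i | c i = j}`) such that for every `j`,
every `i ∈ A_j` and every `k ≠ j`,
`∑_{ℓ ∈ A_j, ℓ ≠ i} |⟨f_i, f_ℓ⟩|² ≤ ∑_{ℓ ∈ A_k} |⟨f_i, f_ℓ⟩|²`.
Such a partition is obtained by minimizing
`∑_j ∑_{i ∈ A_j} ∑_{ℓ ∈ A_j, ℓ ≠ i} |⟨f_i, f_ℓ⟩|²` over all partitions into `r` sets. -/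
theorem exists_partition_offDiagonal_min {H : Type*} [NormedAddCommGroup H]
    [InnerProductSpace ℂ H] (n r : ℕ) (hr : 1 ≤ r) (f : Fin n → H) :
    ∃ c : Fin n → Fin r,
      (∀ c' : Fin n → Fin r,
        (∑ i, ∑ ℓ ∈ Finset.univ.filter (fun ℓ => ℓ ≠ i ∧ c ℓ = c i),
            ‖⟪f i, f ℓ⟫_ℂ‖ ^ 2) ≤
        (∑ i, ∑ ℓ ∈ Finset.univ.filter (fun ℓ => ℓ ≠ i ∧ c' ℓ = c' i),
            ‖⟪f i, f ℓ⟫_ℂ‖ ^ 2)) ∧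
      (∀ j : Fin r, ∀ i : Fin n, c i = j → ∀ k : Fin r, k ≠ j →
        ∑ ℓ ∈ Finset.univ.filter (fun ℓ => ℓ ≠ i ∧ c ℓ = j), ‖⟪f i, f ℓ⟫_ℂ‖ ^ 2 ≤
        ∑ ℓ ∈ Finset.univ.filter (fun ℓ => c ℓ = k), ‖⟪f i, f ℓ⟫_ℂ‖ ^ 2) := by
  have : Nonempty (Fin r) := ⟨⟨0, hr⟩⟩
  set g : Fin n → Fin n → ℝ := fun i ℓ => ‖⟪f i, f ℓ⟫_ℂ‖ ^ 2
  have hg : ∀ a b, g a b = g b a := fun a b => by simp only [g, norm_inner_symm]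
  obtain ⟨c, hmin⟩ := Finite.exists_min (intraClassWeight (κ := Fin r) g)
  refine ⟨c, hmin, ?_⟩
  rintro j i rfl k hk
  rw [← classWeight_of_ne g c hk]
  exact classWeight_self_le_of_forall_le hg hmin i k
end

section
/- Let {f_i}_{i=1}^n be a unit norm Riesz basis for ℓ₂ⁿ with bounds 0 < A ≤ B and let r ≥ 1 be a natural number. Then there exists a partition {A_1,…,A_r} of {1,…,n} such that for every j ∈ {1,…,r} and every i ∈ A_j, one has ∑_{ℓ ∈ A_j, ℓ ≠ i} |⟨f_i, f_ℓ⟩|² ≤ B²/r. -/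
/-!
Colour the vectors so as to minimise the total weight `∑ |⟨f_k, f_ℓ⟩|²` of monochromatic pairs.
Recolouring a single vector `f_i` changes that total by twice the change of its own
monochromatic weight, so at a minimiser every `f_i` already sits in the colour class where its
weight is smallest, i.e. at most the average `(1/r) ∑_{ℓ ≠ i} |⟨f_i, f_ℓ⟩|²`. The upper Riesz
bound, applied to the coefficients `a_ℓ = ⟨f_ℓ, f_i⟩`, is the Bessel bound
`∑_ℓ |⟨f_i, f_ℓ⟩|² ≤ B² ‖f_i‖² = B²`.
-/

open scoped InnerProductSpace
open Finset

theorem Fintype.sum_sum_eq_add_sum_erase {ι M : Type*} [Fintype ι] [DecidableEq ι]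
    [AddCommMonoid M] (F : ι → ι → M) (i : ι) :
    ∑ k, ∑ ℓ, F k ℓ = F i i + (∑ ℓ ∈ univ.erase i, F i ℓ) + (∑ k ∈ univ.erase i, F k i) +
      ∑ k ∈ univ.erase i, ∑ ℓ ∈ univ.erase i, F k ℓ := by
  simp_rw [← add_sum_erase univ _ (mem_univ i), sum_add_distrib]
  abel

section Coloring

variable {ι κ : Type*} [Fintype ι] [DecidableEq ι] [DecidableEq κ] (w : ι → ι → ℝ)

def sameColorWeight (c : ι → κ) (i : ι) (j : κ) : ℝ :=
  ∑ ℓ ∈ univ.filter (fun ℓ => ℓ ≠ i ∧ c ℓ = j), w i ℓ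

/-- Diagonal pairs are counted too; they contribute `∑ k, w k k` whatever `c` is. -/
def monochromaticWeight (c : ι → κ) : ℝ :=
  ∑ k, ∑ ℓ, if c k = c ℓ then w k ℓ else 0

theorem sameColorWeight_eq_sum_erase (c : ι → κ) (i : ι) (j : κ) :
    sameColorWeight w c i j = ∑ ℓ ∈ univ.erase i, if c ℓ = j then w i ℓ else 0 := by
  rw [← sum_filter, sameColorWeight]
  congr 1
  ext ℓ
  simp

theorem sum_sameColorWeight [Fintype κ] (c : ι → κ) (i : ι) :
    ∑ j, sameColorWeight w c i j = ∑ ℓ ∈ univ.erase i, w i ℓ := by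
  rw [← sum_fiberwise (univ.erase i) c (w i)]
  refine sum_congr rfl fun j _ => ?_
  rw [sameColorWeight]
  congr 1
  ext ℓ
  simp

theorem monochromaticWeight_eq (hw : ∀ k ℓ, w k ℓ = w ℓ k) (c : ι → κ) (i : ι) :
    monochromaticWeight w c = w i i + 2 * sameColorWeight w c i (c i) +
      ∑ k ∈ univ.erase i, ∑ ℓ ∈ univ.erase i, if c k = c ℓ then w k ℓ else 0 := by
  rw [monochromaticWeight, Fintype.sum_sum_eq_add_sum_erase _ i, sameColorWeight_eq_sum_erase]
  simp only [hw _ i, eq_comm (a := c i), if_true]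
  ring

theorem monochromaticWeight_update (hw : ∀ k ℓ, w k ℓ = w ℓ k) (c : ι → κ) (i : ι) (j : κ) :
    monochromaticWeight w (Function.update c i j) = monochromaticWeight w c +
      2 * (sameColorWeight w c i j - sameColorWeight w c i (c i)) := by
  simp only [monochromaticWeight_eq w hw _ i, Function.update_self, sameColorWeight_eq_sum_erase]
  have hupdate : ∀ ℓ ∈ univ.erase i, Function.update c i j ℓ = c ℓ :=
    fun ℓ hℓ => Function.update_of_ne (ne_of_mem_erase hℓ) j c
  rw [sum_congr rfl fun ℓ hℓ => by rw [hupdate ℓ hℓ],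
    sum_congr rfl fun k hk => sum_congr rfl fun ℓ hℓ => by rw [hupdate k hk, hupdate ℓ hℓ]]
  ring

theorem exists_sameColorWeight_le [Fintype κ] [Nonempty κ] (hw : ∀ k ℓ, w k ℓ = w ℓ k) {M : ℝ}
    (hM : ∀ i, ∑ ℓ ∈ univ.erase i, w i ℓ ≤ M) :
    ∃ c : ι → κ, ∀ i, sameColorWeight w c i (c i) ≤ M / Fintype.card κ := by
  obtain ⟨c, hmin⟩ := Finite.exists_min (monochromaticWeight w (κ := κ))
  refine ⟨c, fun i => ?_⟩
  have hle : ∀ j, sameColorWeight w c i (c i) ≤ sameColorWeight w c i j := fun j => by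
    have := hmin (Function.update c i j)
    rw [monochromaticWeight_update w hw] at this
    linarith
  have hcard : (Fintype.card κ : ℝ) * sameColorWeight w c i (c i) ≤ M := by
    calc (Fintype.card κ : ℝ) * sameColorWeight w c i (c i)
        ≤ ∑ j, sameColorWeight w c i j := by
          simpa using card_nsmul_le_sum univ _ _ fun j _ => hle j
      _ = ∑ ℓ ∈ univ.erase i, w i ℓ := sum_sameColorWeight w c i
      _ ≤ M := hM i
  rw [le_div_iff₀ (by exact_mod_cast Fintype.card_pos)]
  linarith

end Coloring

theorem sum_norm_inner_sq_le_of_norm_sum_smul_sq_le {𝕜 E ι : Type*} [RCLike 𝕜]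
    [NormedAddCommGroup E] [InnerProductSpace 𝕜 E] [Fintype ι] (f : ι → E) (B : ℝ)
    (hup : ∀ a : ι → 𝕜, ‖∑ i, a i • f i‖ ^ 2 ≤ B ^ 2 * ∑ i, ‖a i‖ ^ 2) (x : E) :
    ∑ ℓ, ‖⟪x, f ℓ⟫_𝕜‖ ^ 2 ≤ B ^ 2 * ‖x‖ ^ 2 := by
  set X := ∑ ℓ, ‖⟪x, f ℓ⟫_𝕜‖ ^ 2
  set y := ∑ ℓ, ⟪f ℓ, x⟫_𝕜 • f ℓ
  have hX : 0 ≤ X := sum_nonneg fun ℓ _ => by positivity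
  have hinner : ⟪x, y⟫_𝕜 = (X : 𝕜) := by
    simp only [y, X, inner_sum, inner_smul_right, ← inner_conj_symm x (f _), RCLike.mul_conj,
      RCLike.norm_conj]
    push_cast
    rfl
  have hXy : X ≤ ‖x‖ * ‖y‖ := by
    calc X = ‖⟪x, y⟫_𝕜‖ := by rw [hinner, RCLike.norm_ofReal, abs_of_nonneg hX]
      _ ≤ ‖x‖ * ‖y‖ := norm_inner_le_norm x y
  have hy : ‖y‖ ^ 2 ≤ B ^ 2 * X := by
    simpa only [norm_inner_symm] using hup fun ℓ => ⟪f ℓ, x⟫_𝕜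
  rcases hX.eq_or_lt with hX0 | hXpos
  · rw [← hX0]; positivity
  · refine le_of_mul_le_mul_left ?_ hXpos
    calc X * X ≤ (‖x‖ * ‖y‖) ^ 2 := by nlinarith
      _ ≤ ‖x‖ ^ 2 * (B ^ 2 * X) := by rw [mul_pow]; gcongr
      _ = X * (B ^ 2 * ‖x‖ ^ 2) := by ring

theorem exists_partition_offDiagonal_le_general {n : ℕ} (f : Fin n → EuclideanSpace ℂ (Fin n))
    (A B : ℝ) (r : ℕ) (hr : 1 ≤ r)
    (hnorm : ∀ i, ‖f i‖ = 1)
    (hriesz : ∀ a : Fin n → ℂ,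
      A ^ 2 * ∑ i, ‖a i‖ ^ 2 ≤ ‖∑ i, a i • f i‖ ^ 2 ∧
      ‖∑ i, a i • f i‖ ^ 2 ≤ B ^ 2 * ∑ i, ‖a i‖ ^ 2) :
    ∃ c : Fin n → Fin r, ∀ j : Fin r, ∀ i : Fin n, c i = j →
      ∑ ℓ ∈ Finset.univ.filter (fun ℓ => ℓ ≠ i ∧ c ℓ = j), ‖⟪f i, f ℓ⟫_ℂ‖ ^ 2 ≤
        B ^ 2 / r := by
  have : Nonempty (Fin r) := ⟨⟨0, hr⟩⟩
  have hbessel (i : Fin n) : ∑ ℓ ∈ univ.erase i, ‖⟪f i, f ℓ⟫_ℂ‖ ^ 2 ≤ B ^ 2 := by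
    calc ∑ ℓ ∈ univ.erase i, ‖⟪f i, f ℓ⟫_ℂ‖ ^ 2 ≤ ∑ ℓ, ‖⟪f i, f ℓ⟫_ℂ‖ ^ 2 :=
          sum_le_univ_sum_of_nonneg fun ℓ => by positivity
      _ ≤ B ^ 2 * ‖f i‖ ^ 2 :=
          sum_norm_inner_sq_le_of_norm_sum_smul_sq_le f B (fun a => (hriesz a).2) (f i)
      _ = B ^ 2 := by rw [hnorm i, one_pow, mul_one]
  obtain ⟨c, hc⟩ := exists_sameColorWeight_le (κ := Fin r) (fun i ℓ => ‖⟪f i, f ℓ⟫_ℂ‖ ^ 2)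
    (fun k ℓ => by rw [norm_inner_symm]) hbessel
  refine ⟨c, fun j i hij => ?_⟩
  simpa [← hij, sameColorWeight] using hc i

/-- Step 2: if `{f_i}_{i=1}^n` is a unit norm Riesz basis for `ℓ₂ⁿ` with bounds
`0 < A ≤ B` and `r ≥ 1`, there is a partition `{A_1,…,A_r}` of `{1,…,n}` (encoded by a
coloring `c`, with `A_j = {i | c i = j}`) such that for every `j` and every `i ∈ A_j`,
`∑_{ℓ ∈ A_j, ℓ ≠ i} |⟨f_i, f_ℓ⟩|² ≤ B²/r`. -/
theorem exists_partition_offDiagonal_le {n : ℕ} (f : Fin n → EuclideanSpace ℂ (Fin n))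
    (A B : ℝ) (r : ℕ) (hA : 0 < A) (hAB : A ≤ B) (hr : 1 ≤ r)
    (hnorm : ∀ i, ‖f i‖ = 1)
    (hspan : Submodule.span ℂ (Set.range f) = ⊤)
    (hriesz : ∀ a : Fin n → ℂ,
      A ^ 2 * ∑ i, ‖a i‖ ^ 2 ≤ ‖∑ i, a i • f i‖ ^ 2 ∧
      ‖∑ i, a i • f i‖ ^ 2 ≤ B ^ 2 * ∑ i, ‖a i‖ ^ 2) :
    ∃ c : Fin n → Fin r, ∀ j : Fin r, ∀ i : Fin n, c i = j →
      ∑ ℓ ∈ Finset.univ.filter (fun ℓ => ℓ ≠ i ∧ c ℓ = j), ‖⟪f i, f ℓ⟫_ℂ‖ ^ 2 ≤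
        B ^ 2 / r :=
  exists_partition_offDiagonal_le_general f A B r hr hnorm hriesz
end

section
/- Let {f_i}_{i=1}^n be a unit norm Riesz basis for ℓ₂ⁿ with bounds 0 < A ≤ B and let r ≥ 1 be a natural number. Then there exists a partition {A_1,…,A_r} of {1,…,n} with the following property: for each j, write A_j = {i_1 < i_2 < ⋯ < i_k} and let {e_{i_1},…,e_{i_k}} be the orthonormal system obtained by applying the Gram–Schmidt process to (f_{i_1},…,f_{i_k}) in this order; then for every m ∈ {1,…,k}, |⟨f_{i_m}, e_{i_m}⟩|² ≥ 1 − B⁴/(A⁴ r). -/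
/-!
Colour the indices greedily in increasing order, giving `i` a colour `j` with
`r * ∑_{k < i, c k = j} ‖⟪f k, f i⟫‖² ≤ ∑_{k < i} ‖⟪f k, f i⟫‖²`. The upper Riesz bound bounds
the right-hand side by `B²`, and the lower Riesz bound gives
`A² ‖P (f i)‖² ≤ ∑_{k < i, c k = c i} ‖⟪f k, f i⟫‖²` for the projection `P` onto the span of the
earlier vectors of the same colour. As the Gram–Schmidt vector `e_i` is the normalized component
of `f i` orthogonal to that span,
`‖⟪f i, e_i⟫‖² = 1 - ‖P (f i)‖² ≥ 1 - B² / (A² r)`.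
-/

open scoped InnerProductSpace

/-- The Gram–Schmidt orthonormalization of a finite tuple of vectors
(applied in the order of the indices). -/
noncomputable def gramSchmidtTuple {E : Type*} [NormedAddCommGroup E]
    [InnerProductSpace ℂ E] {k : ℕ} (g : Fin k → E) : Fin k → E :=
  @InnerProductSpace.gramSchmidtNormed ℂ E _ _ _ (Fin k) _ _ Finite.to_wellFoundedLT g

open Finset Submodule InnerProductSpace

section GramSchmidt

variable {𝕜 E ι : Type*} [RCLike 𝕜] [NormedAddCommGroup E] [InnerProductSpace 𝕜 E]
  [LinearOrder ι] [LocallyFiniteOrderBot ι] [WellFoundedLT ι]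

theorem inner_gramSchmidt_eq_norm_sq (f : ι → E) (n : ι) :
    ⟪f n, gramSchmidt 𝕜 f n⟫_𝕜 = (‖gramSchmidt 𝕜 f n‖ : 𝕜) ^ 2 := by
  rw [gramSchmidt_def'' 𝕜 f n, inner_add_left, sum_inner, inner_self_eq_norm_sq_to_K,
    sum_eq_zero fun i hi => ?_, add_zero]
  rw [inner_smul_left, gramSchmidt_orthogonal 𝕜 f (mem_Iio.1 hi).ne, mul_zero]

theorem inner_gramSchmidtNormed_eq_norm (f : ι → E) (n : ι) :
    ⟪f n, gramSchmidtNormed 𝕜 f n⟫_𝕜 = ‖gramSchmidt 𝕜 f n‖ := by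
  rw [gramSchmidtNormed, inner_smul_right, inner_gramSchmidt_eq_norm_sq]
  rcases eq_or_ne (‖gramSchmidt 𝕜 f n‖ : 𝕜) 0 with h | h
  · simp [h]
  · field_simp

variable [FiniteDimensional 𝕜 E]

theorem gramSchmidt_eq_starProjection_orthogonal (f : ι → E) (n : ι) :
    gramSchmidt 𝕜 f n = (span 𝕜 (f '' Set.Iio n))ᗮ.starProjection (f n) := by
  have hmem : f n - gramSchmidt 𝕜 f n ∈ span 𝕜 (f '' Set.Iio n) := by
    rw [gramSchmidt_def, sub_sub_cancel, ← span_gramSchmidt_Iio]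
    exact sum_mem fun i hi => by
      rw [starProjection_singleton]
      exact smul_mem _ _ (subset_span ⟨i, mem_Iio.1 hi, rfl⟩)
  have horth : gramSchmidt 𝕜 f n ∈ (span 𝕜 (f '' Set.Iio n))ᗮ := by
    rw [← span_gramSchmidt_Iio]
    refine (isOrtho_span.2 ?_).le (mem_span_singleton_self _)
    rintro _ rfl _ ⟨i, hi, rfl⟩
    exact gramSchmidt_orthogonal 𝕜 f (ne_of_gt hi)
  exact (eq_starProjection_of_mem_orthogonal' horth (le_orthogonal_orthogonal _ hmem)
    (add_sub_cancel _ _).symm).symm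

theorem norm_inner_gramSchmidtNormed_sq (f : ι → E) (n : ι) :
    ‖⟪f n, gramSchmidtNormed 𝕜 f n⟫_𝕜‖ ^ 2 =
      ‖f n‖ ^ 2 - ‖(span 𝕜 (f '' Set.Iio n)).starProjection (f n)‖ ^ 2 := by
  rw [inner_gramSchmidtNormed_eq_norm, RCLike.norm_ofReal, abs_norm,
    gramSchmidt_eq_starProjection_orthogonal,
    norm_sq_eq_add_norm_sq_starProjection (f n) (span 𝕜 (f '' Set.Iio n))]
  ring

end GramSchmidt

section Riesz

variable {𝕜 E ι : Type*} [RCLike 𝕜] [NormedAddCommGroup E] [InnerProductSpace 𝕜 E]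
  [Fintype ι] {f : ι → E}

theorem sum_norm_inner_sq_le {B : ℝ}
    (hupper : ∀ a : ι → 𝕜, ‖∑ i, a i • f i‖ ^ 2 ≤ B ^ 2 * ∑ i, ‖a i‖ ^ 2) (y : E) :
    ∑ i, ‖⟪f i, y⟫_𝕜‖ ^ 2 ≤ B ^ 2 * ‖y‖ ^ 2 := by
  set z := ∑ i, ⟪f i, y⟫_𝕜 • f i
  set s := ∑ i, ‖⟪f i, y⟫_𝕜‖ ^ 2
  have hs0 : 0 ≤ s := by positivity
  have hzy : ⟪z, y⟫_𝕜 = s := by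
    simp only [z, s, sum_inner, inner_smul_left, RCLike.conj_mul]
    push_cast
    rfl
  have hs : s ≤ ‖z‖ * ‖y‖ := by
    simpa [hzy, abs_of_nonneg hs0] using norm_inner_le_norm (𝕜 := 𝕜) z y
  have hz : ‖z‖ ^ 2 ≤ B ^ 2 * s := hupper _
  have key : s * s ≤ s * (B ^ 2 * ‖y‖ ^ 2) := by
    nlinarith [mul_self_le_mul_self hs0 hs, mul_le_mul_of_nonneg_right hz (sq_nonneg ‖y‖)]
  rcases hs0.eq_or_lt with h | h
  · rw [← h]; positivity
  · exact le_of_mul_le_mul_left key h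

variable [FiniteDimensional 𝕜 E]

theorem sq_mul_norm_starProjection_span_le {A : ℝ}
    (hlower : ∀ a : ι → 𝕜, A ^ 2 * ∑ i, ‖a i‖ ^ 2 ≤ ‖∑ i, a i • f i‖ ^ 2)
    (S : Finset ι) (y : E) :
    A ^ 2 * ‖(span 𝕜 (f '' S)).starProjection y‖ ^ 2 ≤ ∑ i ∈ S, ‖⟪f i, y⟫_𝕜‖ ^ 2 := by
  obtain ⟨l, hlS, hlp⟩ := (Finsupp.mem_span_image_iff_linearCombination 𝕜).1
    ((span 𝕜 (f '' S)).starProjection_apply_mem y)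
  have hl : ∀ i ∉ S, l i = 0 := fun i hi => Finsupp.notMem_support_iff.1 fun h => hi (hlS h)
  set p := (span 𝕜 (f '' S)).starProjection y
  have hp : p = ∑ i ∈ S, l i • f i := by
    rw [← hlp, Finsupp.linearCombination_apply,
      Finsupp.sum_of_support_subset l (fun i hi => hlS hi) _ fun i _ => zero_smul 𝕜 (f i)]
  have hpy : ‖p‖ ^ 2 ≤ ∑ i ∈ S, ‖l i‖ * ‖⟪f i, y⟫_𝕜‖ := by
    calc ‖p‖ ^ 2 = RCLike.re ⟪p, y⟫_𝕜 := (re_inner_starProjection_eq_normSq _ y).symm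
      _ ≤ ‖⟪p, y⟫_𝕜‖ := RCLike.re_le_norm _
      _ ≤ ∑ i ∈ S, ‖l i‖ * ‖⟪f i, y⟫_𝕜‖ := by
        rw [hp, sum_inner]
        refine (norm_sum_le _ _).trans (sum_le_sum fun i _ => ?_)
        rw [inner_smul_left, norm_mul, RCLike.norm_conj]
  have hCS := sum_mul_sq_le_sq_mul_sq S (‖l ·‖) (‖⟪f ·, y⟫_𝕜‖)
  have hlow : A ^ 2 * ∑ i ∈ S, ‖l i‖ ^ 2 ≤ ‖p‖ ^ 2 := by
    rw [hp, sum_subset (subset_univ S) fun i _ hi => by rw [hl i hi, norm_zero, sq, zero_mul],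
      sum_subset (subset_univ S) fun i _ hi => by rw [hl i hi, zero_smul]]
    exact hlower l
  have key : ‖p‖ ^ 2 * (A ^ 2 * ‖p‖ ^ 2) ≤ ‖p‖ ^ 2 * ∑ i ∈ S, ‖⟪f i, y⟫_𝕜‖ ^ 2 :=
    calc ‖p‖ ^ 2 * (A ^ 2 * ‖p‖ ^ 2) = A ^ 2 * (‖p‖ ^ 2) ^ 2 := by ring
      _ ≤ A ^ 2 * ((∑ i ∈ S, ‖l i‖ ^ 2) * ∑ i ∈ S, ‖⟪f i, y⟫_𝕜‖ ^ 2) := by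
        gcongr
        exact (pow_le_pow_left₀ (sq_nonneg _) hpy 2).trans hCS
      _ ≤ ‖p‖ ^ 2 * ∑ i ∈ S, ‖⟪f i, y⟫_𝕜‖ ^ 2 := by
        rw [← mul_assoc]
        gcongr
  rcases (sq_nonneg ‖p‖).eq_or_lt with h | h
  · rw [← h, mul_zero]; positivity
  · exact le_of_mul_le_mul_left key h

end Riesz

theorem Finset.image_orderIsoOfFin_Iio {α : Type*} [LinearOrder α] (s : Finset α) {k : ℕ}
    (h : #s = k) (m : Fin k) :
    (fun t => (s.orderIsoOfFin h t : α)) '' Set.Iio m =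
      ↑{x ∈ s | x < (s.orderIsoOfFin h m : α)} := by
  ext x
  simp only [Set.mem_image, Set.mem_Iio, coe_filter]
  constructor
  · rintro ⟨t, ht, rfl⟩
    exact ⟨(s.orderIsoOfFin h t).2, (s.orderIsoOfFin h).lt_iff_lt.2 ht⟩
  · rintro ⟨hx, hxm⟩
    refine ⟨(s.orderIsoOfFin h).symm ⟨x, hx⟩, ?_, by simp⟩
    rw [OrderIso.symm_apply_lt]
    exact hxm

theorem exists_card_nsmul_le_sum {β M : Type*} [Fintype β] [Nonempty β] [AddCommMonoid M]
    [LinearOrder M] [IsOrderedCancelAddMonoid M] (x : β → M) :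
    ∃ j, Fintype.card β • x j ≤ ∑ j, x j := by
  obtain ⟨j, -, hj⟩ := exists_le_of_sum_le (s := univ) (f := fun j => Fintype.card β • x j)
    (g := fun _ => ∑ j, x j) univ_nonempty (by simp [← smul_sum])
  exact ⟨j, hj⟩

section Greedy

variable {ι M : Type*} [LinearOrder ι] [LocallyFiniteOrderBot ι]
  [AddCommMonoid M] [LinearOrder M] [IsOrderedCancelAddMonoid M]

attribute [local instance] IsWellOrder.toHasWellFounded

noncomputable def greedyColoring [WellFoundedLT ι] (w : ι → ι → M) (r : ℕ) [NeZero r] (i : ι) :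
    Fin r :=
  (exists_card_nsmul_le_sum fun j : Fin r =>
    ∑ k : Iio i, if greedyColoring w r k = j then w k i else 0).choose
termination_by i
decreasing_by all_goals exact mem_Iio.1 k.2

theorem card_nsmul_sum_greedyColoring_le [WellFoundedLT ι] (w : ι → ι → M) (r : ℕ) [NeZero r]
    (i : ι) :
    r • ∑ k ∈ Iio i with greedyColoring w r k = greedyColoring w r i, w k i ≤
      ∑ k ∈ Iio i, w k i := by
  have h := (exists_card_nsmul_le_sum fun j : Fin r =>
    ∑ k : Iio i, if greedyColoring w r k = j then w k i else 0).choose_spec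
  rw [← greedyColoring, Fintype.card_fin, sum_comm] at h
  simp only [sum_ite_eq, mem_univ, if_true] at h
  rw [sum_filter]
  convert h using 2 <;> exact (sum_coe_sort _ _).symm

end Greedy

theorem norm_inner_gramSchmidtTuple_orderIsoOfFin_sq {E ι : Type*} [NormedAddCommGroup E]
    [InnerProductSpace ℂ E] [FiniteDimensional ℂ E] [LinearOrder ι] (f : ι → E) (s : Finset ι)
    {k : ℕ} (h : #s = k) (m : Fin k) :
    ‖⟪f (s.orderIsoOfFin h m), gramSchmidtTuple (fun t => f (s.orderIsoOfFin h t)) m⟫_ℂ‖ ^ 2 =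
      ‖f (s.orderIsoOfFin h m)‖ ^ 2 -
        ‖(span ℂ (f '' ↑{x ∈ s | x < (s.orderIsoOfFin h m : ι)})).starProjection
          (f (s.orderIsoOfFin h m))‖ ^ 2 := by
  have himage : (fun t => f (s.orderIsoOfFin h t)) '' Set.Iio m =
      f '' ↑{x ∈ s | x < (s.orderIsoOfFin h m : ι)} := by
    rw [← s.image_orderIsoOfFin_Iio h m, Set.image_image]
  rw [← himage]
  exact norm_inner_gramSchmidtNormed_sq (fun t => f (s.orderIsoOfFin h t)) m

theorem sq_mul_norm_starProjection_greedyColoring_le {𝕜 E ι : Type*} [RCLike 𝕜]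
    [NormedAddCommGroup E] [InnerProductSpace 𝕜 E] [FiniteDimensional 𝕜 E] [LinearOrder ι]
    [LocallyFiniteOrderBot ι] [WellFoundedLT ι] [Fintype ι] {f : ι → E} {A B : ℝ}
    (hlower : ∀ a : ι → 𝕜, A ^ 2 * ∑ i, ‖a i‖ ^ 2 ≤ ‖∑ i, a i • f i‖ ^ 2)
    (hupper : ∀ a : ι → 𝕜, ‖∑ i, a i • f i‖ ^ 2 ≤ B ^ 2 * ∑ i, ‖a i‖ ^ 2)
    (r : ℕ) [NeZero r] (i : ι) :
    let c := greedyColoring (fun k i => ‖⟪f k, f i⟫_𝕜‖ ^ 2) r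
    A ^ 2 * r * ‖(span 𝕜 (f '' ↑{k ∈ Iio i | c k = c i})).starProjection (f i)‖ ^ 2 ≤
      B ^ 2 * ‖f i‖ ^ 2 := by
  intro c
  calc A ^ 2 * r * ‖(span 𝕜 (f '' ↑{k ∈ Iio i | c k = c i})).starProjection (f i)‖ ^ 2
      = r * (A ^ 2 * ‖(span 𝕜 (f '' ↑{k ∈ Iio i | c k = c i})).starProjection (f i)‖ ^ 2) := by
        ring
    _ ≤ r * ∑ k ∈ Iio i with c k = c i, ‖⟪f k, f i⟫_𝕜‖ ^ 2 := by
        gcongr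
        exact sq_mul_norm_starProjection_span_le hlower _ _
    _ ≤ ∑ k ∈ Iio i, ‖⟪f k, f i⟫_𝕜‖ ^ 2 := by
        simpa only [nsmul_eq_mul] using
          card_nsmul_sum_greedyColoring_le (fun k i => ‖⟪f k, f i⟫_𝕜‖ ^ 2) r i
    _ ≤ ∑ k, ‖⟪f k, f i⟫_𝕜‖ ^ 2 :=
        sum_le_sum_of_subset_of_nonneg (subset_univ _) fun _ _ _ => sq_nonneg _
    _ ≤ B ^ 2 * ‖f i‖ ^ 2 := sum_norm_inner_sq_le hupper (f i)

theorem exists_partition_gramSchmidt_diagonal_large_general {n : ℕ}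
    (f : Fin n → EuclideanSpace ℂ (Fin n)) (A B : ℝ) (r : ℕ)
    (hA : 0 < A) (hAB : A ≤ B) (hr : 1 ≤ r)
    (hnorm : ∀ i, ‖f i‖ = 1)
    (hriesz : ∀ a : Fin n → ℂ,
      A ^ 2 * ∑ i, ‖a i‖ ^ 2 ≤ ‖∑ i, a i • f i‖ ^ 2 ∧
      ‖∑ i, a i • f i‖ ^ 2 ≤ B ^ 2 * ∑ i, ‖a i‖ ^ 2) :
    ∃ c : Fin n → Fin r, ∀ j : Fin r, ∀ k : ℕ,
      ∀ hcard : (Finset.univ.filter (fun i => c i = j)).card = k,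
      ∀ m : Fin k,
        1 - B ^ 4 / (A ^ 4 * r) ≤
          ‖⟪f ((Finset.univ.filter (fun i => c i = j)).orderIsoOfFin hcard m),
            gramSchmidtTuple (fun t : Fin k =>
              f ((Finset.univ.filter (fun i => c i = j)).orderIsoOfFin hcard t)) m⟫_ℂ‖ ^ 2 := by
  have : NeZero r := ⟨by omega⟩
  set c := greedyColoring (fun k i => ‖⟪f k, f i⟫_ℂ‖ ^ 2) r
  have hproj (i : Fin n) :
      ‖(span ℂ (f '' ↑{k ∈ Iio i | c k = c i})).starProjection (f i)‖ ^ 2 ≤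
        B ^ 4 / (A ^ 4 * r) := by
    have hkey := sq_mul_norm_starProjection_greedyColoring_le
      (fun a => (hriesz a).1) (fun a => (hriesz a).2) r i
    rw [hnorm, one_pow, mul_one] at hkey
    rw [le_div_iff₀ (by positivity)]
    nlinarith [pow_le_pow_left₀ hA.le hAB 2]
  refine ⟨c, fun j k hcard m => ?_⟩
  set i := ((Finset.univ.filter fun i => c i = j).orderIsoOfFin hcard m : Fin n)
  have hci : c i = j := (mem_filter.1 ((Finset.univ.filter _).orderIsoOfFin hcard m).2).2
  have hT : {x ∈ Finset.univ.filter (fun i => c i = j) | x < i} = {k ∈ Iio i | c k = c i} := by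
    ext; simp [hci, and_comm]
  rw [norm_inner_gramSchmidtTuple_orderIsoOfFin_sq, hT, hnorm, one_pow]
  linarith [hproj i]

/-- Step 4: if `{f_i}_{i=1}^n` is a unit norm Riesz basis for `ℓ₂ⁿ` with bounds
`0 < A ≤ B` and `r ≥ 1`, there is a partition `{A_1,…,A_r}` of `{1,…,n}` (encoded by a
coloring `c`, with `A_j = {i | c i = j}`) such that for each `j`, writing
`A_j = {i_1 < ⋯ < i_k}` and letting `{e_{i_1},…,e_{i_k}}` be the Gram–Schmidt
orthonormalization of `(f_{i_1},…,f_{i_k})`, one has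
`|⟨f_{i_m}, e_{i_m}⟩|² ≥ 1 − B⁴/(A⁴ r)` for every `m`. -/
theorem exists_partition_gramSchmidt_diagonal_large {n : ℕ}
    (f : Fin n → EuclideanSpace ℂ (Fin n)) (A B : ℝ) (r : ℕ)
    (hA : 0 < A) (hAB : A ≤ B) (hr : 1 ≤ r)
    (hnorm : ∀ i, ‖f i‖ = 1)
    (hspan : Submodule.span ℂ (Set.range f) = ⊤)
    (hriesz : ∀ a : Fin n → ℂ,
      A ^ 2 * ∑ i, ‖a i‖ ^ 2 ≤ ‖∑ i, a i • f i‖ ^ 2 ∧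
      ‖∑ i, a i • f i‖ ^ 2 ≤ B ^ 2 * ∑ i, ‖a i‖ ^ 2) :
    ∃ c : Fin n → Fin r, ∀ j : Fin r, ∀ k : ℕ,
      ∀ hcard : (Finset.univ.filter (fun i => c i = j)).card = k,
      ∀ m : Fin k,
        1 - B ^ 4 / (A ^ 4 * r) ≤
          ‖⟪f ((Finset.univ.filter (fun i => c i = j)).orderIsoOfFin hcard m),
            gramSchmidtTuple (fun t : Fin k =>
              f ((Finset.univ.filter (fun i => c i = j)).orderIsoOfFin hcard t)) m⟫_ℂ‖ ^ 2 :=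
  exists_partition_gramSchmidt_diagonal_large_general f A B r hA hAB hr hnorm hriesz
end
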